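/- arXiv:2305.07806 — 2 statements merged into one kernel-verified Lean document; each statement's English description precedes it below -/
import Mathlib

section
/- Let m be a nonnegative integer and λ an m-asymmetric partition (Frobenius coordinates (α | α+m)). Then the sum of contents over cells of λ minus the sum of contents over cells of λ' equals -m·|λ|. -/
/-!
Transposition negates contents, so the left-hand side is twice the content sum of `λ`.
Split `λ` into the hooks of its diagonal cells. The `k`-th hook has an arm of `a` cells
with contents `0, …, a - 1` and a leg of `b - 1` cells with contents `-1, …, -(b - 1)`,
where `a = λ_k - k` and `b = λ'_k - k`. Twice its content sum is
`a(a - 1) - b(b - 1) = (a - b)(a + b - 1)`, and `a + b - 1` is the size of the hook,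
so `b = a + m` gives `-m` times the size of the hook.
-/

/-- A Young diagram `μ` is `m`-asymmetric if its Frobenius coordinates `(α|β)` satisfy
`β i = α i + m` for all `i` up to the rank. -/
def YoungDiagram.IsAsymmetric (m : ℕ) (μ : YoungDiagram) : Prop :=
  ∀ i : ℕ, (i, i) ∈ μ → μ.colLen i = μ.rowLen i + m

open Finset

theorem two_mul_sum_Ico_sub_eq {a b : ℕ} (hab : a ≤ b) :
    2 * ∑ j ∈ Ico a b, ((j : ℤ) - a) = (b - a) * (b - a - 1) := by
  induction b, hab using Nat.le_induction with
  | base => simp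
  | succ b hab ih =>
    rw [sum_Ico_succ_top hab, mul_add, ih]
    push_cast
    ring

namespace YoungDiagram

def content (u : ℕ × ℕ) : ℤ := u.2 - u.1

theorem sum_content_transpose (μ : YoungDiagram) :
    ∑ u ∈ μ.transpose.cells, content u = -∑ u ∈ μ.cells, content u := by
  simp only [transpose, Equiv.finsetCongr_apply, sum_map, ← sum_neg_distrib]
  refine sum_congr rfl fun u _ => ?_
  simp [content]

-- The hook of the diagonal cell `(k, k)`; empty when `(k, k) ∉ μ`.
def diagonalHook (μ : YoungDiagram) (k : ℕ) : Finset (ℕ × ℕ) :=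
  {u ∈ μ.cells | min u.1 u.2 = k}

variable {μ : YoungDiagram} {M : Type*} [AddCommMonoid M]

theorem sum_cells_eq_sum_diagonalHook (f : ℕ × ℕ → M) :
    ∑ u ∈ μ.cells, f u =
      ∑ k ∈ range (μ.colLen 0) with (k, k) ∈ μ, ∑ u ∈ μ.diagonalHook k, f u := by
  refine (sum_fiberwise_of_maps_to (fun u hu => ?_) f).symm
  have hu : u ∈ μ := (μ.mem_cells u).1 hu
  refine mem_filter.2 ⟨mem_range.2 ?_, μ.up_left_mem (min_le_left _ _) (min_le_right _ _) hu⟩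
  have hfst : u.1 < μ.colLen 0 := mem_iff_lt_colLen.1 (μ.up_left_mem le_rfl (Nat.zero_le _) hu)
  exact hfst.trans_le' (min_le_left _ _)

theorem diagonalHook_eq_union (k : ℕ) :
    μ.diagonalHook k =
      (Ico k (μ.rowLen k)).map (.sectR k ℕ) ∪ (Ico (k + 1) (μ.colLen k)).map (.sectL ℕ k) := by
  ext ⟨i, j⟩
  simp only [diagonalHook, mem_filter, mem_cells, mem_union, mem_map,
    mem_Ico, Function.Embedding.sectR_apply, Function.Embedding.sectL_apply, Prod.mk.injEq]
  constructor
  · rintro ⟨hmem, hmin⟩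
    rcases le_or_gt i j with hij | hji
    · obtain rfl : i = k := by omega
      exact .inl ⟨j, ⟨hij, mem_iff_lt_rowLen.1 hmem⟩, rfl, rfl⟩
    · obtain rfl : j = k := by omega
      exact .inr ⟨i, ⟨hji, mem_iff_lt_colLen.1 hmem⟩, rfl, rfl⟩
  · rintro (⟨j, ⟨hkj, hj⟩, rfl, rfl⟩ | ⟨i, ⟨hki, hi⟩, rfl, rfl⟩)
    · exact ⟨mem_iff_lt_rowLen.2 hj, min_eq_left hkj⟩
    · exact ⟨mem_iff_lt_colLen.2 hi, min_eq_right (by omega)⟩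

theorem sum_diagonalHook (f : ℕ × ℕ → M) (k : ℕ) :
    ∑ u ∈ μ.diagonalHook k, f u =
      ∑ j ∈ Ico k (μ.rowLen k), f (k, j) + ∑ i ∈ Ico (k + 1) (μ.colLen k), f (i, k) := by
  rw [diagonalHook_eq_union, sum_union, sum_map, sum_map]
  · rfl
  · simp only [disjoint_left, mem_map, mem_Ico, Function.Embedding.sectR_apply,
      Function.Embedding.sectL_apply]
    rintro _ ⟨j, -, rfl⟩ ⟨i, hi, hik⟩
    simp only [Prod.mk.injEq] at hik
    omega

theorem card_diagonalHook {k : ℕ} (hk : (k, k) ∈ μ) :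
    (#(μ.diagonalHook k) : ℤ) = (μ.rowLen k - k) + (μ.colLen k - k) - 1 := by
  have hrow := mem_iff_lt_rowLen.1 hk
  have hcol := mem_iff_lt_colLen.1 hk
  rw [card_eq_sum_ones, sum_diagonalHook]
  simp only [sum_const, Nat.card_Ico, smul_eq_mul, mul_one]
  push_cast [Nat.sub_add_comm hcol.le, hrow.le, Nat.succ_le_of_lt hcol]
  ring

theorem two_mul_sum_content_diagonalHook {k : ℕ} (hk : (k, k) ∈ μ) :
    2 * ∑ u ∈ μ.diagonalHook k, content u =
      (μ.rowLen k - k) * (μ.rowLen k - k - 1) - (μ.colLen k - k) * (μ.colLen k - k - 1) := by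
  have hcol := mem_iff_lt_colLen.1 hk
  have hleg : ∑ i ∈ Ico (k + 1) (μ.colLen k), content (i, k) =
      -∑ i ∈ Ico k (μ.colLen k), ((i : ℤ) - k) := by
    rw [sum_eq_sum_Ico_succ_bot hcol, sub_self, zero_add, ← sum_neg_distrib]
    exact sum_congr rfl fun i _ => by simp [content]
  rw [sum_diagonalHook, hleg, mul_add, mul_neg]
  simp only [content]
  rw [two_mul_sum_Ico_sub_eq (mem_iff_lt_rowLen.1 hk).le, two_mul_sum_Ico_sub_eq hcol.le]
  ring

end YoungDiagram

open YoungDiagram in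
/-- If λ is an m-asymmetric partition, then the sum of contents over
cells of λ minus the sum of contents over cells of λ' equals -m·|λ|. -/
theorem sum_contents_sub_sum_contents_conj (m : ℕ) (μ : YoungDiagram)
    (h : μ.IsAsymmetric m) :
    (∑ u ∈ μ.cells, ((u.2 : ℤ) - (u.1 : ℤ))) -
      ∑ u ∈ μ.transpose.cells, ((u.2 : ℤ) - (u.1 : ℤ)) = -(m : ℤ) * μ.cells.card := by
  have hook : ∀ k, (k, k) ∈ μ →
      2 * ∑ u ∈ μ.diagonalHook k, content u = -(m : ℤ) * #(μ.diagonalHook k) := by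
    intro k hk
    rw [two_mul_sum_content_diagonalHook hk, card_diagonalHook hk, h k hk]
    push_cast
    ring
  change ∑ u ∈ μ.cells, content u - ∑ u ∈ μ.transpose.cells, content u = _
  rw [sum_content_transpose, sub_neg_eq_add, ← two_mul, card_eq_sum_ones, Nat.cast_sum,
    sum_cells_eq_sum_diagonalHook, sum_cells_eq_sum_diagonalHook, mul_sum, mul_sum]
  refine sum_congr rfl fun k hk => ?_
  rw [← Nat.cast_sum, ← card_eq_sum_ones, hook k (mem_filter.1 hk).2]
end

section
/- Let λ be a partition and m ≥ 0. Then dim F^(n)_λ = dim F^(m+n)_{λ'} holds for every n ≥ ℓ(λ) if and only if λ' is m-asymmetric (equivalently, λ has Frobenius coordinates (α+m | α) for some strict partition α). Here dim F^(n)_π = Π_{u∈π} (n+c(u))/h(u). -/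
/-!
Transposition preserves hook lengths and negates contents, so by the hook content formula
the identity `dim F^(n)_μ = dim F^(m+n)_μ'` for all large `n` is the polynomial identity
`∏_c (x + c) = ∏_c (x + m - c)` over the contents `c` of `μ`, i.e. the multiset of contents is
invariant under `c ↦ m - c`. The cells of content `k` form an initial segment of the `k`-th
diagonal, whose `i`-th cell lies in `μ` iff `i - μ'_i < k < μ_i - i`. So the invariance says
that every such interval with `(i, i) ∈ μ` is symmetric about `m / 2`, i.e. `μ_i = μ'_i + m`.
-/

/-- The dimension of the irreducible gl_N-module with highest weight the partition μ,
given by the hook content formula: Π_{u ∈ μ} (N + c(u)) / h(u). -/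
noncomputable def dimF (N : ℕ) (μ : YoungDiagram) : ℚ :=
  ∏ u ∈ μ.cells,
    ((N : ℚ) + ((u.2 : ℚ) - (u.1 : ℚ))) /
      ((μ.rowLen u.1 + μ.colLen u.2 - u.1 - u.2 - 1 : ℕ) : ℚ)

open Finset Polynomial

theorem Multiset.eq_of_prod_map_add_eq {R : Type*} [CommRing R] [IsDomain R] {s t : Multiset R}
    {S : Set R} (hS : S.Infinite) (h : ∀ x ∈ S, (s.map (x + ·)).prod = (t.map (x + ·)).prod) :
    s = t := by
  have heval (r : Multiset R) (x : R) :
      ((r.map Neg.neg).map fun a => X - C a).prod.eval x = (r.map (x + ·)).prod := by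
    simp [eval_multiset_prod, Multiset.map_map]
  have hpoly := eq_of_infinite_eval_eq ((s.map Neg.neg).map fun a => X - C a).prod
    ((t.map Neg.neg).map fun a => X - C a).prod <| hS.mono fun x hx => by
      rw [Set.mem_ofPred_eq, heval, heval, h x hx]
  have hneg := congrArg roots hpoly
  rw [roots_multiset_prod_X_sub_C, roots_multiset_prod_X_sub_C] at hneg
  exact Multiset.map_injective neg_injective hneg

theorem Nat.lt_card_filter_range_iff {P : ℕ → Prop} [DecidablePred P] {N : ℕ}
    (hP : ∀ ⦃i j⦄, j ≤ i → P i → P j) (hN : ∀ i, P i → i < N) (i : ℕ) :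
    i < #{j ∈ range N | P j} ↔ P i := by
  constructor
  · intro hi
    by_contra hPi
    have : {j ∈ range N | P j} ⊆ range i := fun j hj => by
      simp only [mem_filter, mem_range] at hj ⊢
      by_contra hji
      exact hPi (hP (by omega) hj.2)
    simpa using (card_le_card this).trans_lt' hi
  · intro hPi
    have : range (i + 1) ⊆ {j ∈ range N | P j} := fun j hj => by
      have hPj := hP (mem_range_succ_iff.mp hj) hPi
      simpa [hPj] using hN j hPj
    simpa using card_le_card this

namespace YoungDiagram

variable (μ : YoungDiagram)

def contents : Multiset ℤ := μ.cells.val.map fun u => (u.2 : ℤ) - u.1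

def hookLength (u : ℕ × ℕ) : ℕ := μ.rowLen u.1 + μ.colLen u.2 - u.1 - u.2 - 1

theorem cells_transpose :
    μ.transpose.cells = μ.cells.map (Equiv.prodComm ℕ ℕ).toEmbedding :=
  rfl

theorem contents_transpose : μ.transpose.contents = μ.contents.map Neg.neg := by
  simp [contents, cells_transpose, Multiset.map_map]

theorem hookLength_transpose (u : ℕ × ℕ) :
    μ.transpose.hookLength u = μ.hookLength u.swap := by
  simp only [hookLength, rowLen_transpose, colLen_transpose, Prod.fst_swap, Prod.snd_swap]
  omega

theorem prod_hookLength_transpose :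
    ∏ u ∈ μ.transpose.cells, μ.transpose.hookLength u =
      ∏ u ∈ μ.cells, μ.hookLength u := by
  simp [cells_transpose, hookLength_transpose]

theorem hookLength_pos {u : ℕ × ℕ} (hu : u ∈ μ) : 0 < μ.hookLength u := by
  have := mem_iff_lt_rowLen.mp hu
  have := mem_iff_lt_colLen.mp hu
  unfold hookLength
  omega

theorem dimF_eq_prod_contents (N : ℕ) :
    dimF N μ = ((μ.contents.map ((N : ℤ) + ·)).prod : ℚ) /
      ((∏ u ∈ μ.cells, μ.hookLength u : ℕ) : ℚ) := by
  rw [dimF, prod_div_distrib, Nat.cast_prod, contents, Multiset.map_map, Int.cast_multiset_prod,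
    Multiset.map_map, prod_eq_multiset_prod]
  congr 1
  refine congrArg _ (Multiset.map_congr rfl fun u _ => ?_)
  simp only [Function.comp_apply]
  push_cast
  ring

theorem dimF_eq_dimF_transpose_iff (m n : ℕ) :
    dimF n μ = dimF (m + n) μ.transpose ↔
      (μ.contents.map ((n : ℤ) + ·)).prod =
        ((μ.contents.map ((m : ℤ) - ·)).map ((n : ℤ) + ·)).prod := by
  have hH : ((∏ u ∈ μ.cells, μ.hookLength u : ℕ) : ℚ) ≠ 0 :=
    Nat.cast_ne_zero.mpr <| prod_ne_zero_iff.mpr fun u hu =>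
      (μ.hookLength_pos ((mem_cells u).mp hu)).ne'
  rw [dimF_eq_prod_contents, dimF_eq_prod_contents, prod_hookLength_transpose, div_left_inj' hH,
    Int.cast_inj, contents_transpose, Multiset.map_map, Multiset.map_map]
  refine Eq.congr_right (congrArg _ (Multiset.map_congr rfl fun c _ => ?_))
  simp only [Function.comp_apply]
  push_cast
  ring

/-- The `i`-th cell, counted from the main diagonal, on the diagonal of content `k`. -/
def contentCell (k : ℤ) (i : ℕ) : ℕ × ℕ := (i + (-k).toNat, i + k.toNat)

theorem contentCell_sub_min (u : ℕ × ℕ) :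
    contentCell ((u.2 : ℤ) - u.1) (min u.1 u.2) = u := by
  ext <;> simp only [contentCell] <;> omega

theorem min_contentCell (k : ℤ) (i : ℕ) : min (contentCell k i).1 (contentCell k i).2 = i := by
  simp only [contentCell]
  omega

theorem sub_contentCell (k : ℤ) (i : ℕ) :
    ((contentCell k i).2 : ℤ) - (contentCell k i).1 = k := by
  simp only [contentCell]
  omega

theorem contentCell_mem_iff (k : ℤ) (i : ℕ) :
    contentCell k i ∈ μ ↔ (i : ℤ) - μ.colLen i < k ∧ k < (μ.rowLen i : ℤ) - i := by
  have hdiag : i < μ.rowLen i ↔ i < μ.colLen i := mem_iff_lt_rowLen.symm.trans mem_iff_lt_colLen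
  rcases le_or_gt 0 k with hk | hk
  · rw [contentCell, show (-k).toNat = 0 by omega, add_zero, mem_iff_lt_rowLen]
    omega
  · rw [contentCell, show k.toNat = 0 by omega, add_zero, mem_iff_lt_colLen]
    omega

theorem contentCell_mem_of_le {k : ℤ} {i j : ℕ} (hji : j ≤ i) (hi : contentCell k i ∈ μ) :
    contentCell k j ∈ μ :=
  μ.up_left_mem (by simp [hji]) (by simp [hji]) hi

theorem lt_colLen_zero_of_contentCell_mem {k : ℤ} {i : ℕ} (hi : contentCell k i ∈ μ) :
    i < μ.colLen 0 :=
  (Nat.le_add_right i _).trans_lt (mem_iff_lt_colLen.mp (μ.up_left_mem le_rfl (Nat.zero_le _) hi))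

theorem count_contents (k : ℤ) :
    μ.contents.count k = #{i ∈ range (μ.colLen 0) | contentCell k i ∈ μ} := by
  rw [contents, Multiset.count_map, ← filter_val, ← card_def]
  refine card_nbij' (fun u => min u.1 u.2) (contentCell k) ?_ ?_ ?_ ?_ <;>
    simp only [coe_filter, mem_cells, mem_range]
  · rintro u ⟨hu, rfl⟩
    rw [← contentCell_sub_min u] at hu
    exact ⟨μ.lt_colLen_zero_of_contentCell_mem hu, hu⟩
  · rintro i ⟨-, hi⟩
    exact ⟨hi, (sub_contentCell k i).symm⟩
  · rintro u ⟨-, rfl⟩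
    exact contentCell_sub_min u
  · intro i _
    exact min_contentCell k i

theorem lt_count_contents_iff (k : ℤ) (i : ℕ) :
    i < μ.contents.count k ↔ contentCell k i ∈ μ := by
  rw [count_contents]
  exact Nat.lt_card_filter_range_iff (fun _ _ hji hi => μ.contentCell_mem_of_le hji hi)
    (fun _ => μ.lt_colLen_zero_of_contentCell_mem) i

theorem count_contents_eq_iff (k l : ℤ) :
    μ.contents.count k = μ.contents.count l ↔
      ∀ i, contentCell k i ∈ μ ↔ contentCell l i ∈ μ := by
  simp_rw [← lt_count_contents_iff]
  exact ⟨fun h i => by rw [h], eq_of_forall_lt_iff⟩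

theorem contents_map_sub_eq_iff (m : ℤ) :
    μ.contents.map (m - ·) = μ.contents ↔
      ∀ k i, contentCell k i ∈ μ ↔ contentCell (m - k) i ∈ μ := by
  rw [Multiset.ext]
  refine forall_congr' fun k => ?_
  have hcount := μ.contents.count_map_eq_count' (m - ·) sub_right_injective (m - k)
  rw [sub_sub_cancel] at hcount
  rw [hcount, eq_comm, count_contents_eq_iff]

theorem transpose_isAsymmetric_iff (m : ℕ) :
    μ.transpose.IsAsymmetric m ↔
      ∀ k i, contentCell k i ∈ μ ↔ contentCell (m - k) i ∈ μ := by
  simp only [IsAsymmetric, mem_transpose, Prod.swap_prod_mk, colLen_transpose, rowLen_transpose,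
    contentCell_mem_iff]
  constructor
  · intro h k i
    by_cases hi : (i, i) ∈ μ
    · have := h i hi
      omega
    · have := mt mem_iff_lt_rowLen.mpr hi
      have := mt mem_iff_lt_colLen.mpr hi
      omega
  · intro h i hi
    have := mem_iff_lt_rowLen.mp hi
    have := mem_iff_lt_colLen.mp hi
    -- test the two extreme contents of the `i`-th interval
    have := h (μ.rowLen i - i - 1) i
    have := h (i - μ.colLen i + 1) i
    omega

end YoungDiagram

/-- For a partition λ and m ≥ 0, dim F^(n)_λ = dim F^(m+n)_{λ'} holds for
every n ≥ ℓ(λ) if and only if λ' is m-asymmetric (equivalently, λ has Frobenius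
coordinates (α+m | α) for some strict partition α). -/
theorem dim_eq_dim_conj_iff_asymmetric (μ : YoungDiagram) (m : ℕ) :
    (∀ n : ℕ, μ.colLen 0 ≤ n → dimF n μ = dimF (m + n) μ.transpose) ↔
      μ.transpose.IsAsymmetric m := by
  simp_rw [YoungDiagram.transpose_isAsymmetric_iff, ← YoungDiagram.contents_map_sub_eq_iff,
    YoungDiagram.dimF_eq_dimF_transpose_iff]
  refine ⟨fun h => ?_, fun h n _ => by rw [h]⟩
  have hS : (Nat.cast '' Set.Ici (μ.colLen 0) : Set ℤ).Infinite :=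
    (Set.Ici_infinite _).image Nat.cast_injective.injOn
  refine (Multiset.eq_of_prod_map_add_eq hS ?_).symm
  rintro _ ⟨n, hn, rfl⟩
  exact h n hn
end
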